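/- For nonnegative integers m, k with 2k ≤ 2m, the identity ∑_{j=0}^{k} (2j+1)·[C(m,k−j)·C(m,k+j) − C(m,k−j−1)·C(m,k+j+1)] = C(2m, 2k) holds, expressing that the dimensions of the isotypic components of ⋀^{2k}(ℂ^m⊗ℂ^2) sum to its total dimension. -/

import Mathlib

/-!
Write `g j = C(m, k-j) C(m, k+j)`. The summand is `(2j+1)(g j - g (j+1))`, so summation by parts
turns the sum into `2 ∑_{j ≤ k} g j - g 0` (note `g (k+1) = 0`). Splitting the Vandermonde sum
`C(2m, 2k) = ∑_i C(m, i) C(m, 2k-i)` at its middle term `i = k` gives the same expression.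
-/

/-- Binomial coefficient with integer lower index, with the convention that
`C a b = 0` when `b < 0` or `b > a`. -/
def intChoose (a : ℕ) (b : ℤ) : ℤ :=
  if 0 ≤ b ∧ b ≤ (a : ℤ) then (a.choose b.toNat : ℤ) else 0

lemma intChoose_natCast (a n : ℕ) : intChoose a n = a.choose n := by
  unfold intChoose
  split_ifs with h
  · rfl
  · rw [Nat.choose_eq_zero_of_lt (by omega), Nat.cast_zero]

lemma intChoose_of_neg (a : ℕ) {b : ℤ} (hb : b < 0) : intChoose a b = 0 := by
  simp [intChoose, hb.not_ge]

lemma Finset.sum_range_odd_mul_sub_succ {R : Type*} [CommRing R] (g : ℕ → R) (n : ℕ) :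
    ∑ j ∈ range (n + 1), (2 * (j : R) + 1) * (g j - g (j + 1))
      = 2 * ∑ j ∈ range (n + 1), g j - g 0 - (2 * n + 1) * g (n + 1) := by
  induction n with
  | zero => simp [two_mul]
  | succ n ih =>
    rw [sum_range_succ, ih, sum_range_succ (f := g) (n := n + 1)]
    push_cast
    ring

/-- Vandermonde's identity folded about its middle term. -/
lemma Nat.choose_two_mul_add_sq (m k : ℕ) :
    (2 * m).choose (2 * k) + m.choose k * m.choose k
      = 2 * ∑ j ∈ Finset.range (k + 1), m.choose (k - j) * m.choose (k + j) := by
  set f : ℕ → ℕ := fun i => m.choose i * m.choose (2 * k - i)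
  have vandermonde : (2 * m).choose (2 * k) = ∑ i ∈ Finset.range (2 * k + 1), f i := by
    rw [two_mul m, Nat.add_choose_eq, Finset.Nat.sum_antidiagonal_eq_sum_range_succ_mk]
  have lower : ∑ i ∈ Finset.range (k + 1), f i
      = ∑ j ∈ Finset.range (k + 1), m.choose (k - j) * m.choose (k + j) := by
    rw [← Finset.sum_range_reflect]
    refine Finset.sum_congr rfl fun j hj => ?_
    rw [Finset.mem_range] at hj
    simp only [f, show k + 1 - 1 - j = k - j by omega, show 2 * k - (k - j) = k + j by omega]
  have upper : ∑ i ∈ Finset.range (k + 1), f (k + i)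
      = ∑ j ∈ Finset.range (k + 1), m.choose (k - j) * m.choose (k + j) := by
    refine Finset.sum_congr rfl fun j hj => ?_
    rw [Finset.mem_range] at hj
    simp only [f]
    rw [show 2 * k - (k + j) = k - j by omega, Nat.mul_comm]
  have split : ∑ i ∈ Finset.range (2 * k + 1), f i + f k
      = ∑ i ∈ Finset.range (k + 1), f i + ∑ i ∈ Finset.range (k + 1), f (k + i) := by
    rw [show 2 * k + 1 = k + 1 + k by omega, Finset.sum_range_add,
      Finset.sum_range_succ' (fun i => f (k + i))]
    simp only [Nat.add_zero, Nat.add_right_comm k 1, Nat.add_assoc]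
  have middle : f k = m.choose k * m.choose k := by simp only [f, show 2 * k - k = k by omega]
  rw [vandermonde, ← middle, split, lower, upper, two_mul]

theorem dim_sum_integer_components_general (m k : ℕ) :
    ∑ j ∈ Finset.range (k + 1),
        (2 * (j : ℤ) + 1) *
          (intChoose m ((k : ℤ) - j) * intChoose m ((k : ℤ) + j)
            - intChoose m ((k : ℤ) - j - 1) * intChoose m ((k : ℤ) + j + 1))
      = ((2 * m).choose (2 * k) : ℤ) := by
  set G : ℕ → ℤ := fun j => intChoose m ((k : ℤ) - j) * intChoose m ((k : ℤ) + j)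
  have shift (j : ℕ) :
      intChoose m ((k : ℤ) - j - 1) * intChoose m ((k : ℤ) + j + 1) = G (j + 1) := by
    simp only [G, sub_sub, add_assoc, Nat.cast_succ]
  have vanish : G (k + 1) = 0 := by
    simp only [G, intChoose_of_neg m (by omega : (k : ℤ) - (k + 1 : ℕ) < 0), zero_mul]
  have natural (j : ℕ) (hj : j ∈ Finset.range (k + 1)) :
      G j = (m.choose (k - j) * m.choose (k + j) : ℕ) := by
    rw [Finset.mem_range] at hj
    simp only [G, ← Nat.cast_sub (by omega : j ≤ k), ← Nat.cast_add, intChoose_natCast,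
      Nat.cast_mul]
  calc _ = ∑ j ∈ Finset.range (k + 1), (2 * (j : ℤ) + 1) * (G j - G (j + 1)) :=
          Finset.sum_congr rfl fun j _ => by rw [shift]
    _ = 2 * ∑ j ∈ Finset.range (k + 1), G j - G 0 := by
          rw [Finset.sum_range_odd_mul_sub_succ, vanish, mul_zero, sub_zero]
    _ = ((2 * m).choose (2 * k) : ℤ) := by
          have folded := congrArg (Nat.cast : ℕ → ℤ) (Nat.choose_two_mul_add_sq m k)
          rw [Finset.sum_congr rfl natural, natural 0 (by simp)]
          push_cast at folded ⊢
          simp only [Nat.sub_zero, Nat.add_zero]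
          linarith

/-- The dimensions of the isotypic components of `⋀^{2k}(ℂ^m ⊗ ℂ²)` sum to its
total dimension: `∑_{j=0}^{k} (2j+1)·[C(m,k−j)·C(m,k+j) − C(m,k−j−1)·C(m,k+j+1)]
= C(2m, 2k)`. -/
theorem dim_sum_integer_components (m k : ℕ) (h : 2 * k ≤ 2 * m) :
    ∑ j ∈ Finset.range (k + 1),
        (2 * (j : ℤ) + 1) *
          (intChoose m ((k : ℤ) - j) * intChoose m ((k : ℤ) + j)
            - intChoose m ((k : ℤ) - j - 1) * intChoose m ((k : ℤ) + j + 1))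
      = ((2 * m).choose (2 * k) : ℤ) :=
  dim_sum_integer_components_general m k
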